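/- Let $-\infty < a < b < \infty$, $-\infty < c < d < \infty$, and let $R_2$ be the second Riesz transform on $\mathbb{R}^2$ with kernel $K(x, y) = c_2 \frac{x_2 - y_2}{|x - y|^3}$. Then for $(x_1, x_2)$ outside the boundary of the rectangle $[a,b) \times [c,d)$, $R_2 \mathbf{1}_{[a,b)\times[c,d)}(x_1, x_2) = C\,\{ (\mathrm{arcsinh}\, z_{NW} - \mathrm{arcsinh}\, z_{NE}) - (\mathrm{arcsinh}\, z_{SW} - \mathrm{arcsinh}\, z_{SE}) \}$, where $z_{NW} = \frac{x_1 - a}{|x_2 - d|}$, $z_{NE} = \frac{x_1 - b}{|x_2 - d|}$, $z_{SW} = \frac{x_1 - a}{|x_2 - c|}$, $z_{SE} = \frac{x_1 - b}{|x_2 - c|}$, and $C > 0$ is an absolute constant. In particular, $R_2 \mathbf{1}_{[a,b)\times[c,d)}$ has only logarithmic singularities on the boundary of the rectangle. -/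

import Mathlib

/-!
Truncation is by the sup-norm ball `closedBall x ε = [x₁ - ε, x₁ + ε] × [x₂ - ε, x₂ + ε]`.
Integrate first in `y₂`: for `y₁ ≠ x₁` the kernel has the primitive `(s² + (x₂ - y₂)²)^(-1/2)`,
`s = x₁ - y₁`, which is even in `x₂ - y₂`. So cutting out `[x₂ - ε, x₂ + ε]` does not change the
`y₂`-integral over `[c, d)` once `ε < min |x₂ - c| |x₂ - d|`: that interval then either lies in
`(c, d)` or misses `[c, d]`. The truncated integrals are thus eventually constant, equal to
`∫ₐᵇ (((x₁ - y₁)² + (x₂ - d)²)^(-1/2) - ((x₁ - y₁)² + (x₂ - c)²)^(-1/2)) dy₁`, and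
`-arsinh ((x₁ - y₁) / h)` is a primitive of `((x₁ - y₁)² + h²)^(-1/2)`.
-/

open MeasureTheory Set Filter

noncomputable def R2trunc (a b c d : ℝ) (x : ℝ × ℝ) (ε : ℝ) : ℝ :=
  ∫ y in (Set.Ico a b ×ˢ Set.Ico c d) \ Metric.closedBall x ε,
    (Real.Gamma (3 / 2) / Real.pi ^ ((3 : ℝ) / 2)) *
      (x.2 - y.2) / (((x.1 - y.1) ^ 2 + (x.2 - y.2) ^ 2) ^ ((3 : ℝ) / 2))

open Real

noncomputable def rieszKernel (s u : ℝ) : ℝ := u / (s ^ 2 + u ^ 2) ^ ((3 : ℝ) / 2)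

lemma abs_rieszKernel_le (s u : ℝ) : |rieszKernel s u| ≤ (s ^ 2 + u ^ 2)⁻¹ := by
  rcases (add_nonneg (sq_nonneg s) (sq_nonneg u)).eq_or_lt with hD | hD
  · rw [rieszKernel, ← hD, zero_rpow (by norm_num), div_zero, abs_zero, inv_zero]
  set D := s ^ 2 + u ^ 2
  have h32 : D ^ ((3 : ℝ) / 2) = √D * D := by
    rw [show (3 : ℝ) / 2 = 1 / 2 + 1 by norm_num, rpow_add hD, rpow_one, sqrt_eq_rpow]
  have hu : |u| ≤ √D := abs_le_sqrt (by nlinarith [sq_nonneg s])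
  have hsqrt : 0 < √D := sqrt_pos.2 hD
  calc |rieszKernel s u| = |u| / (√D * D) := by
        rw [rieszKernel, abs_div, h32, abs_of_pos (mul_pos hsqrt hD)]
    _ ≤ √D / (√D * D) := by gcongr
    _ = D⁻¹ := by field_simp

lemma sq_lt_of_notMem_closedBall {x y : ℝ × ℝ} {ε : ℝ} (hε : 0 ≤ ε)
    (hy : y ∉ Metric.closedBall x ε) : ε ^ 2 < (x.1 - y.1) ^ 2 + (x.2 - y.2) ^ 2 := by
  rw [Metric.mem_closedBall, not_le, Prod.dist_eq, lt_max_iff, Real.dist_eq, Real.dist_eq,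
    abs_sub_comm y.1, abs_sub_comm y.2] at hy
  rcases hy with h | h
  · nlinarith [sq_lt_sq.2 (show |ε| < |x.1 - y.1| by rwa [abs_of_nonneg hε]),
      sq_nonneg (x.2 - y.2)]
  · nlinarith [sq_lt_sq.2 (show |ε| < |x.2 - y.2| by rwa [abs_of_nonneg hε]),
      sq_nonneg (x.1 - y.1)]

lemma integrableOn_rieszKernel_of_subset_compl_closedBall (x : ℝ × ℝ) {ε : ℝ} (hε : 0 < ε)
    {S : Set (ℝ × ℝ)} (hSm : MeasurableSet S) (hS : volume S ≠ ⊤)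
    (hSx : S ⊆ (Metric.closedBall x ε)ᶜ) :
    IntegrableOn (fun y => rieszKernel (x.1 - y.1) (x.2 - y.2)) S := by
  refine Measure.integrableOn_of_bounded (M := (ε ^ 2)⁻¹) hS
    (by unfold rieszKernel; fun_prop : Measurable _).aestronglyMeasurable
    (ae_restrict_of_forall_mem hSm fun y hy => ?_)
  calc ‖rieszKernel (x.1 - y.1) (x.2 - y.2)‖ ≤ ((x.1 - y.1) ^ 2 + (x.2 - y.2) ^ 2)⁻¹ :=
        abs_rieszKernel_le _ _
    _ ≤ (ε ^ 2)⁻¹ := by gcongr; exact (sq_lt_of_notMem_closedBall hε.le (hSx hy)).le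

section Vertical

variable {s : ℝ} (hs : s ≠ 0) (q : ℝ)
include hs

lemma hasDerivAt_rpow_neg_half (t : ℝ) :
    HasDerivAt (fun t => (s ^ 2 + (q - t) ^ 2) ^ (-(1 / 2 : ℝ))) (rieszKernel s (q - t)) t := by
  have hD : 0 < s ^ 2 + (q - t) ^ 2 := by positivity
  have hinner : HasDerivAt (fun t => s ^ 2 + (q - t) ^ 2) (-(2 * (q - t))) t := by
    simpa using ((hasDerivAt_id t).const_sub q).pow 2 |>.const_add (s ^ 2)
  refine ((hasDerivAt_rpow_const (Or.inl hD.ne')).comp t hinner).congr_deriv ?_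
  rw [rieszKernel, show -(1 / 2 : ℝ) - 1 = -((3 : ℝ) / 2) by norm_num, rpow_neg hD.le]
  field_simp

lemma continuous_rieszKernel_sub : Continuous fun t => rieszKernel s (q - t) := by
  unfold rieszKernel
  exact (by fun_prop : Continuous fun t => q - t).div
    ((by fun_prop : Continuous fun t => s ^ 2 + (q - t) ^ 2).rpow_const
      fun _ => Or.inr (by norm_num))
    fun t => by positivity

lemma integral_rieszKernel_sub (u v : ℝ) :
    ∫ t in u..v, rieszKernel s (q - t) =
      (s ^ 2 + (q - v) ^ 2) ^ (-(1 / 2 : ℝ)) - (s ^ 2 + (q - u) ^ 2) ^ (-(1 / 2 : ℝ)) :=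
  intervalIntegral.integral_eq_sub_of_hasDerivAt (fun t _ => hasDerivAt_rpow_neg_half hs q t)
    ((continuous_rieszKernel_sub hs q).intervalIntegrable u v)

lemma integral_Ico_rieszKernel_sub {c d : ℝ} (hcd : c ≤ d) :
    ∫ t in Ico c d, rieszKernel s (q - t) =
      (s ^ 2 + (q - d) ^ 2) ^ (-(1 / 2 : ℝ)) - (s ^ 2 + (q - c) ^ 2) ^ (-(1 / 2 : ℝ)) := by
  rw [integral_Ico_eq_integral_Ioo, ← integral_Ioc_eq_integral_Ioo,
    ← intervalIntegral.integral_of_le hcd, integral_rieszKernel_sub hs]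

lemma integral_Icc_rieszKernel_sub_eq_zero {ε : ℝ} (hε : 0 ≤ ε) :
    ∫ t in Icc (q - ε) (q + ε), rieszKernel s (q - t) = 0 := by
  rw [integral_Icc_eq_integral_Ioc, ← intervalIntegral.integral_of_le (by linarith),
    integral_rieszKernel_sub hs]
  ring_nf

lemma integral_Ico_diff_Icc_rieszKernel_sub {c d ε : ℝ} (hcd : c ≤ d) (hε : 0 ≤ ε)
    (hεc : ε < |q - c|) (hεd : ε < |q - d|) :
    ∫ t in Ico c d \ Icc (q - ε) (q + ε), rieszKernel s (q - t) =
      (s ^ 2 + (q - d) ^ 2) ^ (-(1 / 2 : ℝ)) - (s ^ 2 + (q - c) ^ 2) ^ (-(1 / 2 : ℝ)) := by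
  have hcases : Icc (q - ε) (q + ε) ⊆ Ico c d ∨ Disjoint (Ico c d) (Icc (q - ε) (q + ε)) := by
    rw [lt_abs] at hεc hεd
    rcases hεc with hc | hc <;> rcases hεd with hd | hd
    · exact Or.inr (disjoint_left.2 fun t ht ht' => by linarith [ht.2, ht'.1])
    · exact Or.inl fun t ht => ⟨by linarith [ht.1], by linarith [ht.2]⟩
    · linarith
    · exact Or.inr (disjoint_left.2 fun t ht ht' => by linarith [ht.1, ht'.2])
  rcases hcases with hsub | hdisj
  · have hint : IntegrableOn (fun t => rieszKernel s (q - t)) (Ico c d) :=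
      (continuous_rieszKernel_sub hs q).integrableOn_Icc.mono_set Ico_subset_Icc_self
    rw [setIntegral_sdiff measurableSet_Icc hint hsub, integral_Icc_rieszKernel_sub_eq_zero hs q hε,
      sub_zero, integral_Ico_rieszKernel_sub hs q hcd]
  · rw [sdiff_eq_self_iff_disjoint.2 hdisj.symm, integral_Ico_rieszKernel_sub hs q hcd]

end Vertical

lemma hasDerivAt_arsinh_div (p y : ℝ) {h : ℝ} (hh : 0 < h) :
    HasDerivAt (fun y => arsinh ((p - y) / h)) (-((p - y) ^ 2 + h ^ 2) ^ (-(1 / 2 : ℝ))) y := by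
  have hlin : HasDerivAt (fun y => (p - y) / h) (-1 / h) y :=
    ((hasDerivAt_id y).const_sub p).div_const h
  refine ((hasDerivAt_arsinh _).comp y hlin).congr_deriv ?_
  have hsqrt : √(1 + ((p - y) / h) ^ 2) = √((p - y) ^ 2 + h ^ 2) / h := by
    rw [eq_div_iff hh.ne', ← sqrt_sq hh.le, ← sqrt_mul (by positivity), sqrt_sq hh.le]
    congr 1
    field_simp
    ring
  have hpos : 0 < √((p - y) ^ 2 + h ^ 2) := sqrt_pos.2 (by positivity)
  rw [hsqrt, rpow_neg (by positivity), ← sqrt_eq_rpow]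
  field_simp

lemma continuous_rpow_neg_half (p : ℝ) {h : ℝ} (hh : h ≠ 0) :
    Continuous fun y => ((p - y) ^ 2 + h ^ 2) ^ (-(1 / 2 : ℝ)) :=
  (by fun_prop : Continuous fun y => (p - y) ^ 2 + h ^ 2).rpow_const
    fun _ => Or.inl (by positivity)

lemma integral_rpow_neg_half_eq_arsinh (p a b : ℝ) {h : ℝ} (hh : h ≠ 0) :
    ∫ y in a..b, ((p - y) ^ 2 + h ^ 2) ^ (-(1 / 2 : ℝ)) =
      arsinh ((p - a) / |h|) - arsinh ((p - b) / |h|) := by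
  rw [← sq_abs h,
    intervalIntegral.integral_eq_sub_of_hasDerivAt (f := fun y => -arsinh ((p - y) / |h|))
      (fun y _ => (hasDerivAt_arsinh_div p y (abs_pos.2 hh)).neg.congr_deriv (neg_neg _))
      ((continuous_rpow_neg_half p (abs_ne_zero.2 hh)).intervalIntegrable a b)]
  ring

lemma setIntegral_eq_integral_setIntegral_preimage_prodMk {α β E : Type*} [MeasurableSpace α]
    [MeasurableSpace β] {μ : Measure α} {ν : Measure β} [SFinite μ] [SFinite ν]
    [NormedAddCommGroup E] [NormedSpace ℝ E] {f : α × β → E} {S : Set (α × β)}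
    (hS : MeasurableSet S) (hf : IntegrableOn f S (μ.prod ν)) :
    ∫ z in S, f z ∂μ.prod ν = ∫ x, ∫ y in Prod.mk x ⁻¹' S, f (x, y) ∂ν ∂μ := by
  rw [← integral_indicator hS, integral_prod _ ((integrable_indicator_iff hS).2 hf)]
  congr 1 with x
  rw [← integral_indicator (measurable_prodMk_left hS)]
  rfl

theorem integral_rieszKernel_Ico_prod_Ico_diff_closedBall (x : ℝ × ℝ) {a b c d ε : ℝ}
    (hab : a ≤ b) (hcd : c ≤ d) (hε : 0 < ε) (hεc : ε < |x.2 - c|) (hεd : ε < |x.2 - d|) :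
    ∫ y in (Ico a b ×ˢ Ico c d) \ Metric.closedBall x ε, rieszKernel (x.1 - y.1) (x.2 - y.2) =
      (arsinh ((x.1 - a) / |x.2 - d|) - arsinh ((x.1 - b) / |x.2 - d|)) -
        (arsinh ((x.1 - a) / |x.2 - c|) - arsinh ((x.1 - b) / |x.2 - c|)) := by
  obtain ⟨p, q⟩ := x
  dsimp only at hεc hεd ⊢
  set S := (Ico a b ×ˢ Ico c d) \ Metric.closedBall (p, q) ε with hS
  set g : ℝ → ℝ := fun y₁ =>
    ((p - y₁) ^ 2 + (q - d) ^ 2) ^ (-(1 / 2 : ℝ)) - ((p - y₁) ^ 2 + (q - c) ^ 2) ^ (-(1 / 2 : ℝ))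
  have hSm : MeasurableSet S :=
    (measurableSet_Ico.prod measurableSet_Ico).diff Metric.isClosed_closedBall.measurableSet
  have hSfin : volume S ≠ ⊤ :=
    ((Metric.isBounded_Ico a b).prod (Metric.isBounded_Ico c d)
      |>.subset sdiff_subset).measure_lt_top.ne
  have hint := integrableOn_rieszKernel_of_subset_compl_closedBall (p, q) hε hSm hSfin
    fun _ hy => hy.2
  have hslice : ∀ y₁ ≠ p,
      ∫ y₂ in Prod.mk y₁ ⁻¹' S, rieszKernel (p - y₁) (q - y₂) = (Ico a b).indicator g y₁ := by
    intro y₁ hy₁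
    have hs : p - y₁ ≠ 0 := sub_ne_zero.2 hy₁.symm
    rw [hS, ← closedBall_prod_same, preimage_sdiff]
    by_cases ha : y₁ ∈ Ico a b
    · rw [mk_preimage_prod_right ha, indicator_of_mem ha]
      by_cases hp : y₁ ∈ Metric.closedBall p ε
      · rw [mk_preimage_prod_right hp, Real.closedBall_eq_Icc]
        exact integral_Ico_diff_Icc_rieszKernel_sub hs q hcd hε.le hεc hεd
      · rw [mk_preimage_prod_right_eq_empty hp, sdiff_empty]
        exact integral_Ico_rieszKernel_sub hs q hcd
    · rw [mk_preimage_prod_right_eq_empty ha, empty_sdiff, indicator_of_notMem ha,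
        Measure.restrict_empty, integral_zero_measure]
  have hqc : q - c ≠ 0 := abs_pos.1 (hε.trans hεc)
  have hqd : q - d ≠ 0 := abs_pos.1 (hε.trans hεd)
  rw [Measure.volume_eq_prod, setIntegral_eq_integral_setIntegral_preimage_prodMk hSm hint,
    integral_congr_ae (((countable_singleton p).ae_notMem volume).mono hslice),
    integral_indicator measurableSet_Ico, integral_Ico_eq_integral_Ioo,
    ← integral_Ioc_eq_integral_Ioo, ← intervalIntegral.integral_of_le hab,
    intervalIntegral.integral_sub ((continuous_rpow_neg_half p hqd).intervalIntegrable a b)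
      ((continuous_rpow_neg_half p hqc).intervalIntegrable a b),
    integral_rpow_neg_half_eq_arsinh p a b hqd, integral_rpow_neg_half_eq_arsinh p a b hqc]

lemma R2trunc_eq_mul_integral (a b c d : ℝ) (x : ℝ × ℝ) (ε : ℝ) :
    R2trunc a b c d x ε = Gamma (3 / 2) / π ^ ((3 : ℝ) / 2) *
      ∫ y in (Ico a b ×ˢ Ico c d) \ Metric.closedBall x ε, rieszKernel (x.1 - y.1) (x.2 - y.2) := by
  rw [R2trunc, ← integral_const_mul]
  simp only [rieszKernel, mul_div_assoc]

/-- Explicit formula for the second Riesz transform of the indicator of a rectangle: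
away from the boundary of the rectangle (and off the horizontal lines `x₂ = c, d`
where the formula's denominators vanish), the principal value exists and equals
`C {(arcsinh z_NW - arcsinh z_NE) - (arcsinh z_SW - arcsinh z_SE)}`. -/
theorem stmt10 :
    ∃ C : ℝ, 0 < C ∧
      ∀ a b c d : ℝ, a < b → c < d →
        ∀ x : ℝ × ℝ, x ∉ frontier (Set.Ico a b ×ˢ Set.Ico c d) → x.2 ≠ c → x.2 ≠ d →
          Tendsto (R2trunc a b c d x) (nhdsWithin 0 (Set.Ioi 0))
            (nhds (C * ((Real.arsinh ((x.1 - a) / |x.2 - d|) -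
                          Real.arsinh ((x.1 - b) / |x.2 - d|)) -
                        (Real.arsinh ((x.1 - a) / |x.2 - c|) -
                          Real.arsinh ((x.1 - b) / |x.2 - c|))))) := by
  refine ⟨Gamma (3 / 2) / π ^ ((3 : ℝ) / 2), by positivity,
    fun a b c d hab hcd x _ hc hd => tendsto_const_nhds.congr' ?_⟩
  have hδ : 0 < min |x.2 - c| |x.2 - d| :=
    lt_min (abs_pos.2 (sub_ne_zero.2 hc)) (abs_pos.2 (sub_ne_zero.2 hd))
  filter_upwards [Ioo_mem_nhdsGT hδ] with ε ⟨hε, hεδ⟩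
  rw [R2trunc_eq_mul_integral, integral_rieszKernel_Ico_prod_Ico_diff_closedBall x hab.le hcd.le hε
    (hεδ.trans_le (min_le_left _ _)) (hεδ.trans_le (min_le_right _ _))]
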